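/- Greedy exchange property for p-representations: let R be the greedy left-to-right p-representation of T with respect to P (extend the current block while the extension still occurs in P, else start a new block), and let R* be any p-representation of T. Then for every t ≥ 1, the end position of the t-th block of R is at least the end position of the t-th block of R*; hence the greedy representation has the minimum number of blocks. -/

import Mathlib

/-!
Write `e L t` for the end position `((L.take t).flatten).length` of the `t`-th block of `L`.
By induction on `t`, suppose `e R' t ≤ e R t` but `e R (t+1) < e R' (t+1)`. Then the `t`-th
block of `R'` covers the text from position `e R t` up to and including position `e R (t+1)`,
i.e. the greedy block `R[t]` followed by the first symbol `c` of `R[t+1]`. Since blocks of `R'`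
occur in `P`, so does `R[t] ++ [c]`, contradicting greediness. For `t = R'.length` this gives
`e R t = T.length`, and since the blocks of `R` are nonempty, `R` has at most `t` blocks.
-/

namespace List

variable {α : Type*}

theorem drop_take_infix_drop_take (l : List α) {i i' j j' : ℕ} (hi : i' ≤ i) (hj : j ≤ j') :
    (l.take j).drop i <:+: (l.take j').drop i' :=
  (drop_suffix_drop_left _ hi).isInfix.trans ((take_prefix_take_left hj).drop i').isInfix

theorem flatten_eq_flatten_take_append_flatten_drop (L : List (List α)) (t : ℕ) :
    L.flatten = (L.take t).flatten ++ (L.drop t).flatten := by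
  rw [← flatten_append, take_append_drop]

theorem take_length_flatten_take (L : List (List α)) (t : ℕ) :
    L.flatten.take (L.take t).flatten.length = (L.take t).flatten := by
  rw [flatten_eq_flatten_take_append_flatten_drop L t, take_left]

theorem length_flatten_take_le (L : List (List α)) (t : ℕ) :
    (L.take t).flatten.length ≤ L.flatten.length := by
  rw [flatten_eq_flatten_take_append_flatten_drop L t, length_append]
  exact Nat.le_add_right _ _

theorem monotone_length_flatten_take (L : List (List α)) :
    Monotone fun t => (L.take t).flatten.length := by
  intro i j hij
  simpa [take_take, min_eq_left hij] using length_flatten_take_le (L.take j) i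

theorem lt_length_of_length_flatten_take_lt {L : List (List α)} {t : ℕ}
    (h : (L.take t).flatten.length < L.flatten.length) : t < L.length := by
  by_contra! hle
  rw [take_of_length_le hle] at h
  exact h.false

theorem lt_length_of_length_flatten_take_lt_succ {L : List (List α)} {t : ℕ}
    (h : (L.take t).flatten.length < (L.take (t + 1)).flatten.length) : t < L.length := by
  by_contra! hle
  rw [take_of_length_le hle, take_of_length_le (by omega)] at h
  exact h.false

theorem length_flatten_take_lt {L : List (List α)} (hne : ∀ B ∈ L, B ≠ []) {t : ℕ}
    (ht : t < L.length) : (L.take t).flatten.length < L.flatten.length := by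
  rw [flatten_eq_flatten_take_append_flatten_drop L t, length_append, drop_eq_getElem_cons ht,
    flatten_cons, length_append]
  have := length_pos_iff.mpr (hne _ (getElem_mem ht))
  omega

theorem flatten_take_add_one (L : List (List α)) {t : ℕ} (ht : t < L.length) :
    (L.take (t + 1)).flatten = (L.take t).flatten ++ L[t] := by
  rw [take_add_one, getElem?_eq_getElem ht, Option.toList_some, flatten_append, flatten_singleton]

theorem getElem_eq_drop_take_flatten (L : List (List α)) {t : ℕ} (ht : t < L.length) :
    L[t] = (L.flatten.take (L.take (t + 1)).flatten.length).drop (L.take t).flatten.length := by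
  rw [take_length_flatten_take, flatten_take_add_one L ht, drop_left]

theorem getElem_append_head_eq_drop_take_flatten (L : List (List α)) {t : ℕ}
    (ht : t + 1 < L.length) {c : α} (hc : c ∈ L[t + 1].head?) :
    L[t]'(Nat.lt_of_succ_lt ht) ++ [c] =
      (L.flatten.take ((L.take (t + 1)).flatten.length + 1)).drop (L.take t).flatten.length := by
  obtain ⟨cs, hcs⟩ := head?_eq_some_iff.mp hc
  have hsplit : L.flatten = (L.take (t + 1)).flatten ++ c :: (cs ++ (L.drop (t + 2)).flatten) := by
    rw [flatten_eq_flatten_take_append_flatten_drop L (t + 1), drop_eq_getElem_cons ht, hcs]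
    simp
  have htake : L.flatten.take ((L.take (t + 1)).flatten.length + 1) =
      (L.take (t + 1)).flatten ++ [c] := by
    rw [hsplit, take_append, take_of_length_le (by omega), Nat.add_sub_cancel_left]
    rfl
  rw [htake, flatten_take_add_one L (Nat.lt_of_succ_lt ht), append_assoc, drop_left]

theorem length_flatten_take_le_of_greedy {P : List α} {R R' : List (List α)}
    (hjoin : R'.flatten = R.flatten) (hne : ∀ B ∈ R, B ≠ []) (hinfix : ∀ B ∈ R', B <:+: P)
    (hgreedy : ∀ i (h : i + 1 < R.length), ∀ c ∈ R[i + 1].head?,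
      ¬ R[i]'(Nat.lt_of_succ_lt h) ++ [c] <:+: P) (t : ℕ) :
    (R'.take t).flatten.length ≤ (R.take t).flatten.length := by
  induction t with
  | zero => simp
  | succ t ih =>
    by_contra! hlt
    have hR : t + 1 < R.length := lt_length_of_length_flatten_take_lt <|
      hlt.trans_le (hjoin ▸ length_flatten_take_le R' (t + 1))
    have hR' : t < R'.length := lt_length_of_length_flatten_take_lt_succ <|
      ih.trans_lt ((monotone_length_flatten_take R t.le_succ).trans_lt hlt)
    obtain ⟨c, hc⟩ : ∃ c, c ∈ R[t + 1].head? :=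
      Option.isSome_iff_exists.mp (isSome_head?.mpr (hne _ (getElem_mem hR)))
    apply hgreedy t hR c hc
    calc R[t] ++ [c]
        = (R'.flatten.take ((R.take (t + 1)).flatten.length + 1)).drop
            (R.take t).flatten.length := by
          rw [hjoin, getElem_append_head_eq_drop_take_flatten R hR hc]
      _ <:+: (R'.flatten.take (R'.take (t + 1)).flatten.length).drop
            (R'.take t).flatten.length := drop_take_infix_drop_take _ ih hlt
      _ = R'[t] := (getElem_eq_drop_take_flatten R' hR').symm
      _ <:+: P := hinfix _ (getElem_mem hR')

theorem length_le_of_length_flatten_le_length_flatten_take {L : List (List α)}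
    (hne : ∀ B ∈ L, B ≠ []) {n : ℕ} (h : L.flatten.length ≤ (L.take n).flatten.length) :
    L.length ≤ n :=
  not_lt.mp fun hlt => (length_flatten_take_lt hne hlt).not_ge h

end List

/-- Greedy exchange property for p-representations: if `R` is the greedy
left-to-right p-representation of `T` with respect to `P` (no block can be extended
by the next character of the text and still occur in `P`) and `R'` is any
p-representation of `T`, then for every `t` the end position of the `t`-th block of
`R` is at least the end position of the `t`-th block of `R'`; hence `R` has the
minimum number of blocks. -/
theorem greedy_exchange_property
    {α : Type*} (P T : List α)
    (R : List (List α)) (hjoin : R.flatten = T)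
    (hval : ∀ B ∈ R, B ≠ [] ∧ B <:+: P)
    (hgreedy : ∀ i, (h : i + 1 < R.length) → ∀ c ∈ (R.get ⟨i + 1, h⟩).head?,
        ¬ (R.get ⟨i, by omega⟩ ++ [c]) <:+: P)
    (R' : List (List α)) (hjoin' : R'.flatten = T)
    (hval' : ∀ B ∈ R', B ≠ [] ∧ B <:+: P) :
    (∀ t, ((R'.take t).flatten).length ≤ ((R.take t).flatten).length) ∧
    R.length ≤ R'.length := by
  have hsame : R'.flatten = R.flatten := hjoin'.trans hjoin.symm
  have hne : ∀ B ∈ R, B ≠ [] := fun B hB => (hval B hB).1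
  have hexchange := List.length_flatten_take_le_of_greedy hsame hne
    (fun B hB => (hval' B hB).2) hgreedy
  refine ⟨hexchange, List.length_le_of_length_flatten_le_length_flatten_take hne ?_⟩
  simpa only [List.take_length, hsame] using hexchange R'.length
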